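/- arXiv:math/0205165 — 4 statements merged into one kernel-verified Lean document; each statement's English description precedes it below -/
import Mathlib

section
/- A cylindric shape λ[r]/μ[s] of type (k,n) is toric (i.e., the projection of its diagram to the torus Z/kZ × Z/(n-k)Z is injective) if and only if every column of its diagram contains at most k elements, and this holds if and only if every row contains at most n-k elements. -/
open Finset

/-- The set `P_{kn}` of partitions fitting in a `k × (n-k)` rectangle,
represented as antitone functions `Fin k → ℕ` bounded by `n - k`. -/
def PknFinset (k n : ℕ) : Finset (Fin k → ℕ) :=
  ((Finset.univ : Finset (Fin k → Fin (n - k + 1))).image (fun f i => (f i : ℕ))).filter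
    (fun lam => ∀ i j : Fin k, i ≤ j → lam j ≤ lam i)

/-- The 01-word of a partition `λ ∈ P_{kn}`: position `j` (0-based; 1-based `j+1`)
carries a `1` iff `j + 1 = λ_i + (k + 1 - i)` for some row `i`. -/
def omegaWord (n : ℕ) {k : ℕ} (lam : Fin k → ℕ) : Fin n → Bool :=
  fun j => decide (∃ i : Fin k, lam i + (k - (i : ℕ)) = (j : ℕ) + 1)

/-- The complement partition `λ∨`, with `λ∨_i = n - k - λ_{k+1-i}`. -/
def complP (n k : ℕ) (lam : Fin k → ℕ) : Fin k → ℕ :=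
  fun i => (n - k) - lam (Fin.rev i)

/-- Size of the Durfee square of `λ` (number of boxes on the main diagonal). -/
def diag0 {k : ℕ} (lam : Fin k → ℕ) : ℕ :=
  (Finset.univ.filter (fun i : Fin k => (i : ℕ) < lam i)).card

/-- Number of boxes of `λ` on the `i`-th diagonal. -/
def diagI {k : ℕ} (lam : Fin k → ℕ) (i : ℤ) : ℕ :=
  (Finset.univ.filter (fun a : Fin k => 0 ≤ (a : ℤ) + i ∧ (a : ℤ) + 1 + i ≤ (lam a : ℤ))).card

/-- `|λ| = λ_1 + ⋯ + λ_k`. -/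
def psize {k : ℕ} (lam : Fin k → ℕ) : ℕ := ∑ i, lam i

/-- The value at index `t` of the cylindric loop `λ[r]`: the `(k,n)`-periodic
weakly decreasing sequence with `λ[r]_{i+r} = λ_i + r` for `1 ≤ i ≤ k`. -/
def loopVal (n : ℕ) {k : ℕ} (lam : Fin k → ℕ) (r t : ℤ) : ℤ :=
  if h : 0 < k then
    (lam ⟨((t - r - 1) % (k : ℤ)).toNat, by
      have hk0 : ((k : ℤ)) ≠ 0 := by exact_mod_cast h.ne'
      have h1 : 0 ≤ (t - r - 1) % (k : ℤ) := Int.emod_nonneg _ hk0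
      have h2 : (t - r - 1) % (k : ℤ) < (k : ℤ) := Int.emod_lt_of_pos _ (by exact_mod_cast h)
      omega⟩ : ℤ) + r - ((t - r - 1) / (k : ℤ)) * ((n : ℤ) - (k : ℤ))
  else 0

/-- The cylindric diagram of shape `λ[r]/μ[s]`, as a `Shift`-invariant subset of `ℤ²`
(whose quotient modulo `(-k, n-k)ℤ` is the diagram in the cylinder). -/
def cylDiagram (n : ℕ) {k : ℕ} (lam mu : Fin k → ℕ) (r s : ℤ) : Set (ℤ × ℤ) :=
  {p | loopVal n mu s p.1 < p.2 ∧ p.2 ≤ loopVal n lam r p.1}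

/-- The cylindric shape `λ[r]/μ[s]` is toric: the projection of its diagram from the
cylinder `ℤ²/(-k, n-k)ℤ` to the torus `(ℤ/k) × (ℤ/(n-k))` is injective. -/
def IsToricShape (n : ℕ) {k : ℕ} (lam mu : Fin k → ℕ) (r s : ℤ) : Prop :=
  ∀ p q : ℤ × ℤ, p ∈ cylDiagram n lam mu r s → q ∈ cylDiagram n lam mu r s →
    (k : ℤ) ∣ (q.1 - p.1) → ((n : ℤ) - k) ∣ (q.2 - p.2) →
    ∃ m : ℤ, q.1 = p.1 - m * k ∧ q.2 = p.2 + m * ((n : ℤ) - k)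

/-- A semi-standard cylindric tableau of shape `λ/d/μ = λ[d]/μ[0]`, encoded as a
`Shift`-periodic function on `ℤ²` that is positive exactly on the diagram, weakly
increasing along rows and strictly increasing along columns. -/
def IsCylTableau (n : ℕ) {k : ℕ} (lam mu : Fin k → ℕ) (d : ℕ) (T : ℤ × ℤ → ℕ) : Prop :=
  (∀ p : ℤ × ℤ, p ∈ cylDiagram n lam mu (d : ℤ) 0 ↔ 0 < T p) ∧
  (∀ p : ℤ × ℤ, T (p.1 - (k : ℤ), p.2 + ((n : ℤ) - k)) = T p) ∧
  (∀ p : ℤ × ℤ, p ∈ cylDiagram n lam mu (d : ℤ) 0 →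
      (p.1, p.2 + 1) ∈ cylDiagram n lam mu (d : ℤ) 0 → T p ≤ T (p.1, p.2 + 1)) ∧
  (∀ p : ℤ × ℤ, p ∈ cylDiagram n lam mu (d : ℤ) 0 →
      (p.1 + 1, p.2) ∈ cylDiagram n lam mu (d : ℤ) 0 → T p < T (p.1 + 1, p.2))

/-- The number of entries of the cylindric tableau `T` equal to `c`, counted once per
`Shift`-orbit (rows `1,…,k` form a fundamental domain). -/
noncomputable def cylWeight (k : ℕ) (T : ℤ × ℤ → ℕ) (c : ℕ) : ℕ :=
  {p : ℤ × ℤ | 1 ≤ p.1 ∧ p.1 ≤ (k : ℤ) ∧ T p = c}.ncard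

/-- Number of semi-standard cylindric tableaux of shape `λ/d/μ` with weight `β`
(entries taken among `1, …, l`). -/
noncomputable def tabCount (n : ℕ) {k : ℕ} (lam mu : Fin k → ℕ) (d : ℕ) {l : ℕ} (beta : Fin l → ℕ) : ℕ :=
  {T : ℤ × ℤ → ℕ | IsCylTableau n lam mu d T ∧
    (∀ i : Fin l, cylWeight k T ((i : ℕ) + 1) = beta i) ∧
    (∀ c : ℕ, l < c → cylWeight k T c = 0)}.ncard

/-- The elementary symmetric generator `e_t` of `ℤ[q, e_1, …, e_k]` (zero out of range,
`1` for `t = 0`).  The variable `none` is the quantum parameter `q`. -/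
noncomputable def epolyZ (k : ℕ) (t : ℤ) : MvPolynomial (Option (Fin k)) ℤ :=
  if t = 0 then 1
  else if h : 0 < t ∧ t ≤ (k : ℤ) then MvPolynomial.X (some ⟨(t - 1).toNat, by omega⟩) else 0

/-- The complete homogeneous symmetric function `h_m`, expressed in the `e_i`
via the dual Jacobi–Trudi determinant. -/
noncomputable def hpolyD (k m : ℕ) : MvPolynomial (Option (Fin k)) ℤ :=
  Matrix.det (Matrix.of (fun i j : Fin m => epolyZ k (1 + (j : ℤ) - (i : ℤ))))

/-- `h_t` with the convention `h_t = 0` for `t < 0`. -/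
noncomputable def hpolyDZ (k : ℕ) (t : ℤ) : MvPolynomial (Option (Fin k)) ℤ :=
  if 0 ≤ t then hpolyD k t.toNat else 0

/-- The ideal `I_q = ⟨h_{n-k+1}, …, h_{n-1}, h_n + (-1)^k q⟩` of `ℤ[q, e_1, …, e_k]`. -/
noncomputable def qIdeal (k n : ℕ) : Ideal (MvPolynomial (Option (Fin k)) ℤ) :=
  Ideal.span ((hpolyD k '' (Set.Ioo (n - k) n)) ∪
    {hpolyD k n + ((-1) ^ k : ℤ) • MvPolynomial.X none})

/-- The quantum cohomology ring `QH*(Gr_{k,n}) = ℤ[q, e_1, …, e_k]/I_q`. -/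
abbrev QHRing (k n : ℕ) := MvPolynomial (Option (Fin k)) ℤ ⧸ qIdeal k n

/-- The class of the quantum parameter `q` in `QH*(Gr_{k,n})`. -/
noncomputable def qClass (k n : ℕ) : QHRing k n := Ideal.Quotient.mk _ (MvPolynomial.X none)

/-- The Schubert class `σ_λ ∈ QH*(Gr_{k,n})`, defined by the (quantum) Giambelli
formula `σ_λ = det(h_{λ_i + j - i})`. -/
noncomputable def sigmaClass (k n : ℕ) (lam : Fin k → ℕ) : QHRing k n :=
  Ideal.Quotient.mk _
    (Matrix.det (Matrix.of (fun i j : Fin k => hpolyDZ k ((lam i : ℤ) + (j : ℤ) - (i : ℤ)))))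

/-- The special class `h_j = σ_{(j)}`. -/
noncomputable def hClass (k n : ℕ) (j : ℕ) : QHRing k n := Ideal.Quotient.mk _ (hpolyD k j)

/-- The special class `e_j = σ_{(1^j)}`. -/
noncomputable def eClass (k n : ℕ) (j : ℕ) : QHRing k n := Ideal.Quotient.mk _ (epolyZ k (j : ℤ))

/-- The statement that `gw` is the family of structure constants (Gromov–Witten
invariants) of `QH*(Gr_{k,n})`:
`σ_μ * σ_ν = ∑_{d,λ} q^d C_{μν}^{λ,d} σ_λ` (all structure constants vanish
beyond degree `2k(n-k)`, which bounds the possible degrees). -/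
def IsGWFamily (k n : ℕ)
    (gw : (Fin k → ℕ) → (Fin k → ℕ) → (Fin k → ℕ) → ℕ → ℤ) : Prop :=
  ∀ mu nu : Fin k → ℕ, mu ∈ PknFinset k n → nu ∈ PknFinset k n →
    (sigmaClass k n mu * sigmaClass k n nu =
      ∑ e ∈ Finset.range (2 * k * (n - k) + 1), ∑ lm ∈ PknFinset k n,
        gw mu nu lm e • (qClass k n ^ e * sigmaClass k n lm)) ∧
    (∀ e lm, 2 * k * (n - k) < e → gw mu nu lm e = 0)

/-- Recover a partition in `P_{kn}` from a 01-word with `k` ones. -/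
def partOfWord (k n : ℕ) (w : Fin n → Bool) : Fin k → ℕ :=
  fun i =>
    if h : (Finset.univ.filter (fun j : Fin n => w j = true)).card = k then
      ((Finset.orderIsoOfFin _ h (Fin.rev i) : Fin n) : ℕ) + 1 - (k - (i : ℕ))
    else 0

/-- Cyclic rotation of a 01-word: `(rotWord a w)_j = w_{j+a mod n}`. -/
def rotWord (n : ℕ) (a : ℤ) (w : Fin n → Bool) : Fin n → Bool :=
  fun j =>
    if h : 0 < n then
      w ⟨(((j : ℤ) + a) % (n : ℤ)).toNat, by
        have hn0 : ((n : ℤ)) ≠ 0 := by exact_mod_cast h.ne'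
        have h1 : 0 ≤ ((j : ℤ) + a) % (n : ℤ) := Int.emod_nonneg _ hn0
        have h2 : ((j : ℤ) + a) % (n : ℤ) < (n : ℤ) := Int.emod_lt_of_pos _ (by exact_mod_cast h)
        omega⟩
    else false
  
/-- The `a`-th power of the cyclic shift `S` on `P_{kn}`:
`S^a(λ)` is the partition whose 01-word is `ω(λ)` rotated by `a`. -/
def Srot (k n : ℕ) (a : ℤ) (lam : Fin k → ℕ) : Fin k → ℕ :=
  partOfWord k n (rotWord n a (omegaWord n lam))

/-- `φ_i(λ)`: for `1 ≤ i ≤ n` the partial sum `ω_1 + ⋯ + ω_i` of the 01-word of `λ`,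
extended to all `i ∈ ℤ` by `φ_{i+n} = φ_i + k`. -/
def phi (n : ℕ) {k : ℕ} (lam : Fin k → ℕ) (i : ℤ) : ℤ :=
  ((Finset.univ.filter
      (fun j : Fin n => ((j : ℕ) : ℤ) < i % (n : ℤ) ∧ omegaWord n lam j = true)).card : ℤ)
    + (k : ℤ) * (i / (n : ℤ))

/-- `C_{λμν}(q) = ∑_e CCoef(λ,μ,ν,e) q^e`: the coefficient of `q^e` in the
Gromov–Witten generating function `q^d C^d_{λμν}` (zero unless `e` equals the
degree `d = (|λ|+|μ|+|ν|-k(n-k))/n`), where `C^d_{λμν} = C_{λμ}^{ν∨,d}`. -/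
def CCoef (k n : ℕ) (gw : (Fin k → ℕ) → (Fin k → ℕ) → (Fin k → ℕ) → ℕ → ℤ)
    (lam mu nu : Fin k → ℕ) (e : ℕ) : ℤ :=
  if ((psize lam : ℤ) + psize mu + psize nu) = (k : ℤ) * ((n : ℤ) - k) + (e : ℤ) * n then
    gw lam mu (complP n k nu) e
  else 0

/-! Translating by the period `(-k, n-k)` lets one move any torus-collision of two boxes into a
single column (or a single row). Since columns and rows of a cylindric diagram are intervals, a
collision exists iff some column contains two boxes at distance `k` (some row two boxes at
distance `n-k`), and an interval of integers has at most `k` elements iff it contains no two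
points at distance `k`. -/

namespace Set.OrdConnected

variable {S : Set ℤ}

theorem add_mul_notMem (hS : S.OrdConnected) {a : ℤ} (h : ∀ x ∈ S, x + a ∉ S) {x : ℤ}
    (hx : x ∈ S) {j : ℤ} (hj : j ≠ 0) : x + j * a ∉ S := by
  intro hxj
  rcases hj.lt_or_gt with hj | hj
  · refine h _ hxj (hS.uIcc_subset hxj hx ?_)
    rw [Set.mem_uIcc]
    rcases le_total 0 a with ha | ha
    · exact Or.inl ⟨by linarith, by nlinarith⟩
    · exact Or.inr ⟨by nlinarith, by linarith⟩
  · refine h _ hx (hS.uIcc_subset hx hxj ?_)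
    rw [Set.mem_uIcc]
    rcases le_total 0 a with ha | ha
    · exact Or.inl ⟨by linarith, by nlinarith⟩
    · exact Or.inr ⟨by nlinarith, by linarith⟩

theorem finite_and_ncard_le_iff (hS : S.OrdConnected) (k : ℕ) :
    S.Finite ∧ S.ncard ≤ k ↔ ∀ x ∈ S, x + k ∉ S := by
  constructor
  · rintro ⟨hfin, hcard⟩ x hx hxk
    have hle := Set.ncard_le_ncard (hS.out hx hxk) hfin
    rw [← Finset.coe_Icc, Set.ncard_coe_finset, Int.card_Icc] at hle
    omega
  · intro h
    obtain rfl | hk := k.eq_zero_or_pos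
    · have hS0 : S = ∅ := Set.eq_empty_of_forall_notMem fun x hx => h x hx (by simpa using hx)
      simp [hS0]
    -- two points of `S` in the same class mod `k` would be a nonzero multiple of `k` apart
    have hinj : S.InjOn (· % (k : ℤ)) := by
      intro x hx y hy hxy
      obtain ⟨j, hj⟩ := Int.ModEq.dvd (show x ≡ y [ZMOD k] from hxy)
      by_contra hne
      refine hS.add_mul_notMem h hx (j := j) (by rintro rfl; omega) ?_
      rwa [show x + j * k = y by linarith]
    have hmaps : Set.MapsTo (· % (k : ℤ)) S (Set.Ico 0 k) := fun x _ =>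
      ⟨Int.emod_nonneg x (by omega), Int.emod_lt_of_pos x (by omega)⟩
    refine ⟨Set.Finite.of_finite_image ((Set.finite_Ico _ _).subset hmaps.image_subset) hinj, ?_⟩
    calc S.ncard ≤ (Set.Ico (0 : ℤ) k).ncard :=
          Set.ncard_le_ncard_of_injOn _ hmaps hinj (Set.finite_Ico _ _)
      _ = k := by rw [← Finset.coe_Ico, Set.ncard_coe_finset, Int.card_Ico]; simp

end Set.OrdConnected

/-- Injectivity of the projection of `D ⊆ ℤ²` from the cylinder `ℤ² / (-a, b)ℤ` to the torus
`ℤ/a × ℤ/b`. -/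
def IsTorusInjective (D : Set (ℤ × ℤ)) (a b : ℤ) : Prop :=
  ∀ p q : ℤ × ℤ, p ∈ D → q ∈ D → a ∣ q.1 - p.1 → b ∣ q.2 - p.2 →
    ∃ m : ℤ, q.1 = p.1 - m * a ∧ q.2 = p.2 + m * b

section IsTorusInjective

variable {D : Set (ℤ × ℤ)} {a b : ℤ}

theorem isTorusInjective_iff_column (hD : ∀ p ∈ D, ∀ m : ℤ, (p.1 - m * a, p.2 + m * b) ∈ D)
    (hcol : ∀ y, {x | (x, y) ∈ D}.OrdConnected) (ha : a ≠ 0) (hb : b ≠ 0) :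
    IsTorusInjective D a b ↔ ∀ y x, (x, y) ∈ D → (x + a, y) ∉ D := by
  constructor
  · intro h y x hx hxa
    obtain ⟨m, h1, h2⟩ := h (x, y) (x + a, y) hx hxa ⟨1, by ring⟩ ⟨0, by ring⟩
    obtain rfl : m = 0 := by simpa [hb] using (by linarith : m * b = 0)
    exact ha (by simpa using h1)
  · rintro h ⟨x, y⟩ ⟨x', y'⟩ hp hq ⟨c, hc⟩ ⟨e, he⟩
    refine ⟨e, ?_, by dsimp at he ⊢; linarith⟩
    by_contra hne
    dsimp at hc he hne
    refine (hcol y).add_mul_notMem (h y) hp (j := c + e) (fun hce => hne ?_) ?_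
    · linear_combination hc + a * hce
    · have hq' := hD _ hq (-e)
      rwa [show ((x', y').1 - -e * a, (x', y').2 + -e * b) = (x + (c + e) * a, y) from
        Prod.ext (by dsimp; linear_combination hc) (by dsimp; linear_combination he)] at hq'

theorem isTorusInjective_iff_row (hD : ∀ p ∈ D, ∀ m : ℤ, (p.1 - m * a, p.2 + m * b) ∈ D)
    (hrow : ∀ x, {y | (x, y) ∈ D}.OrdConnected) (ha : a ≠ 0) (hb : b ≠ 0) :
    IsTorusInjective D a b ↔ ∀ x y, (x, y) ∈ D → (x, y + b) ∉ D := by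
  constructor
  · intro h x y hy hyb
    obtain ⟨m, h1, h2⟩ := h (x, y) (x, y + b) hy hyb ⟨0, by ring⟩ ⟨1, by ring⟩
    obtain rfl : m = 0 := by simpa [ha] using (by linarith : m * a = 0)
    exact hb (by simpa using h2)
  · rintro h ⟨x, y⟩ ⟨x', y'⟩ hp hq ⟨c, hc⟩ ⟨e, he⟩
    refine ⟨-c, by dsimp at hc ⊢; linarith, ?_⟩
    by_contra hne
    dsimp at hc he hne
    refine (hrow x).add_mul_notMem (h x) hp (j := e + c) (fun hec => hne ?_) ?_
    · linear_combination he + b * hec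
    · have hq' := hD _ hq c
      rwa [show ((x', y').1 - c * a, (x', y').2 + c * b) = (x, y + (e + c) * b) from
        Prod.ext (by dsimp; linear_combination hc) (by dsimp; linear_combination he)] at hq'

end IsTorusInjective

section CylindricLoop

variable {k n : ℕ} {lam mu : Fin k → ℕ}

theorem antitone_of_mem_PknFinset (h : lam ∈ PknFinset k n) : Antitone lam :=
  fun i j hij => (Finset.mem_filter.1 h).2 i j hij

theorem le_sub_of_mem_PknFinset (h : lam ∈ PknFinset k n) (i : Fin k) : lam i ≤ n - k := by
  obtain ⟨f, -, rfl⟩ := Finset.mem_image.1 (Finset.mem_filter.1 h).1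
  exact Nat.lt_succ_iff.1 (f i).isLt

theorem loopVal_add_fin_add_mul (r : ℤ) (i : Fin k) (m : ℤ) :
    loopVal n lam r (r + 1 + i + m * k) = lam i + r - m * (n - k) := by
  have hk : (0 : ℤ) < k := by exact_mod_cast i.pos
  have hi : r + 1 + i + m * k - r - 1 = i + m * k := by ring
  have hmod : ((i : ℤ) + m * k) % k = i := by
    rw [Int.add_mul_emod_self_right, Int.emod_eq_of_lt (by omega) (by omega)]
  have hdiv : ((i : ℤ) + m * k) / k = m := by
    rw [Int.add_mul_ediv_right _ _ hk.ne', Int.ediv_eq_zero_of_lt (by omega) (by omega), zero_add]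
  simp only [loopVal, dif_pos i.pos, hi, hmod, hdiv, Int.toNat_natCast, Fin.eta]

theorem exists_eq_add_fin_add_mul (hk : 0 < k) (r t : ℤ) :
    ∃ (i : Fin k) (m : ℤ), t = r + 1 + i + m * k := by
  have hk' : (0 : ℤ) < k := by exact_mod_cast hk
  have h0 := Int.emod_nonneg (t - r - 1) hk'.ne'
  have hlt := Int.emod_lt_of_pos (t - r - 1) hk'
  refine ⟨⟨((t - r - 1) % k).toNat, by omega⟩, (t - r - 1) / k, ?_⟩
  have := Int.mul_ediv_add_emod (t - r - 1) k
  simp only [Int.toNat_of_nonneg h0]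
  linarith

theorem loopVal_add_mul (hk : 0 < k) (r t c : ℤ) :
    loopVal n lam r (t + c * k) = loopVal n lam r t - c * (n - k) := by
  obtain ⟨i, m, rfl⟩ := exists_eq_add_fin_add_mul hk r t
  rw [show r + 1 + i + m * k + c * k = r + 1 + i + (m + c) * k by ring,
    loopVal_add_fin_add_mul, loopVal_add_fin_add_mul]
  ring

theorem loopVal_antitone (hk : 0 < k) (hkn : k ≤ n) (hlam : lam ∈ PknFinset k n) (r : ℤ) :
    Antitone (loopVal n lam r) := by
  refine antitone_int_of_succ_le fun t => ?_
  obtain ⟨i, m, rfl⟩ := exists_eq_add_fin_add_mul hk r t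
  rw [loopVal_add_fin_add_mul]
  by_cases hi : (i : ℕ) + 1 < k
  · rw [show r + 1 + i + m * k + 1 = r + 1 + (⟨i + 1, hi⟩ : Fin k) + m * k by push_cast; ring,
      loopVal_add_fin_add_mul]
    have := antitone_of_mem_PknFinset hlam (show i ≤ ⟨i + 1, hi⟩ from Fin.le_def.2 (by simp))
    linarith
  · -- the last row of one period is followed by the first row of the next, shifted by `n - k`
    have hik : (i : ℤ) + 1 = k := by omega
    rw [show r + 1 + i + m * k + 1 = r + 1 + (⟨0, hk⟩ : Fin k) + (m + 1) * k by
        push_cast; linear_combination hik,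
      loopVal_add_fin_add_mul]
    have := le_sub_of_mem_PknFinset hlam ⟨0, hk⟩
    have : (lam ⟨0, hk⟩ : ℤ) ≤ n - k := by omega
    linarith

theorem mem_cylDiagram_translate (hk : 0 < k) {r s : ℤ} {p : ℤ × ℤ}
    (hp : p ∈ cylDiagram n lam mu r s) (m : ℤ) :
    (p.1 - m * k, p.2 + m * (n - k)) ∈ cylDiagram n lam mu r s := by
  simp only [cylDiagram, Set.mem_ofPred_eq, sub_eq_add_neg p.1, ← neg_mul,
    loopVal_add_mul hk] at hp ⊢
  constructor <;> linarith [hp.1, hp.2]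

theorem ordConnected_cylDiagram_column (hk : 0 < k) (hkn : k ≤ n) (hlam : lam ∈ PknFinset k n)
    (hmu : mu ∈ PknFinset k n) (r s y : ℤ) :
    {x | (x, y) ∈ cylDiagram n lam mu r s}.OrdConnected := by
  refine ⟨fun x hx x' hx' z hz => ⟨?_, ?_⟩⟩
  · exact (loopVal_antitone hk hkn hmu s hz.1).trans_lt hx.1
  · exact hx'.2.trans (loopVal_antitone hk hkn hlam r hz.2)

theorem ordConnected_cylDiagram_row (r s x : ℤ) :
    {y | (x, y) ∈ cylDiagram n lam mu r s}.OrdConnected :=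
  (Set.ordConnected_Ioc : (Set.Ioc (loopVal n mu s x) (loopVal n lam r x)).OrdConnected)

end CylindricLoop

/-- A cylindric shape `λ[r]/μ[s]` of type `(k,n)` is toric iff every column of its
diagram has at most `k` elements, iff every row has at most `n - k` elements. -/
theorem isToricShape_iff_columns_iff_rows (k n : ℕ) (hk : 1 ≤ k) (hkn : k < n)
    (lam mu : Fin k → ℕ) (hlam : lam ∈ PknFinset k n) (hmu : mu ∈ PknFinset k n)
    (r s : ℤ) :
    (IsToricShape n lam mu r s ↔
      ∀ q : ℤ, {i : ℤ | (i, q) ∈ cylDiagram n lam mu r s}.Finite ∧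
        {i : ℤ | (i, q) ∈ cylDiagram n lam mu r s}.ncard ≤ k) ∧
    (IsToricShape n lam mu r s ↔
      ∀ p : ℤ, {j : ℤ | (p, j) ∈ cylDiagram n lam mu r s}.Finite ∧
        {j : ℤ | (p, j) ∈ cylDiagram n lam mu r s}.ncard ≤ n - k) := by
  have hD : ∀ p ∈ cylDiagram n lam mu r s, ∀ m : ℤ, _ := fun _ hp =>
    mem_cylDiagram_translate hk hp
  have hcol := ordConnected_cylDiagram_column hk hkn.le hlam hmu r s
  have hrow := ordConnected_cylDiagram_row (n := n) (lam := lam) (mu := mu) r s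
  have ha : (k : ℤ) ≠ 0 := by omega
  have hb : (n : ℤ) - k ≠ 0 := by omega
  refine ⟨(isTorusInjective_iff_column hD hcol ha hb).trans ?_,
    (isTorusInjective_iff_row hD hrow ha hb).trans ?_⟩
  · exact forall_congr' fun y => ((hcol y).finite_and_ncard_le_iff k).symm
  · refine forall_congr' fun x => ?_
    rw [(hrow x).finite_and_ncard_le_iff, Nat.cast_sub hkn.le]
    rfl
end

section
/- In QH*(Gr_{kn}), the classes E = σ_{1^k} and H = σ_{(n-k)} satisfy E^n = q^k, H^n = q^{n-k}, E*H = q, and E^{n-k} = H^k = σ_{(n-k)^k} (the class of a point). -/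
/-! Expanding the Jacobi–Trudi determinant that defines `h_m` along its first row gives the
recurrence `h_m = ∑_{j=1}^{k} (-1)^{j-1} e_j h_{m-j}` for `m ≥ 1`. In `QH*(Gr_{kn})` the classes
`h_{n-k+1}, …, h_{n-1}` vanish, so at `m = n` the recurrence collapses to
`h_n = (-1)^{k-1} e_k h_{n-k}`; together with `h_n = (-1)^{k+1} q` this is `E * H = q`.
The same vanishing makes the Jacobi–Trudi matrix `(h_{n-k+j-i})` of the rectangle triangular
modulo the ideal, so `σ_{(n-k)^k} = H^k`. On the other hand, applying the recurrence to the last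
column shows that the rectangle determinants `det (h_{r+j-i})` are multiplied by `e_k` when `r`
grows by one; hence `det (h_{n-k+j-i}) = e_k^{n-k}` as polynomials, i.e. `σ_{(n-k)^k} = E^{n-k}`.
Finally `E^n = E^{n-k} E^k = (H E)^k = q^k`, and symmetrically `H^n = q^{n-k}`. -/

open Finset

section HessenbergDet

variable {R : Type*} [CommRing R] (a : ℤ → R)

def hessenbergDet (m : ℕ) : R := (Matrix.of fun i j : Fin m => a (1 + j - i)).det

def hessenbergDetZ (t : ℤ) : R := if 0 ≤ t then hessenbergDet a t.toNat else 0

@[simp] lemma hessenbergDet_zero : hessenbergDet a 0 = 1 := Matrix.det_isEmpty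

@[simp] lemma hessenbergDetZ_natCast (m : ℕ) : hessenbergDetZ a m = hessenbergDet a m := by
  simp [hessenbergDetZ]

lemma hessenbergDetZ_of_neg {t : ℤ} (ht : t < 0) : hessenbergDetZ a t = 0 := by
  simp [hessenbergDetZ, not_le.mpr ht]

variable {a}

lemma det_succAbove_eq_hessenbergDet (ha0 : a 0 = 1) (hneg : ∀ t < 0, a t = 0) :
    ∀ (m : ℕ) (j : Fin (m + 1)),
      (Matrix.of fun i l : Fin m => a (j.succAbove l - i)).det = hessenbergDet a (m - j)
  | 0, j => by simp
  | m + 1, j => by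
    refine Fin.cases ?_ (fun j => ?_) j
    · simp only [Fin.succAbove_zero, Fin.val_succ, Fin.val_zero, Nat.sub_zero, hessenbergDet]
      congr 2 with i l
      push_cast; ring_nf
    · -- for `j ≠ 0` the first column is `(1, 0, …, 0)`
      rw [Matrix.det_succ_column_zero, Fin.sum_univ_succ, Fintype.sum_eq_zero _ fun i => ?_,
        add_zero]
      · have hminor : (Matrix.of fun i l : Fin (m + 1) => a (j.succ.succAbove l - i)).submatrix
            Fin.succ Fin.succ = Matrix.of fun i l : Fin m => a (j.succAbove l - i) := by
          ext i l
          simp only [Matrix.submatrix_apply, Matrix.of_apply, Fin.succ_succAbove_succ, Fin.val_succ]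
          push_cast; ring_nf
        simp [hminor, ha0, det_succAbove_eq_hessenbergDet ha0 hneg m j]
      · simp [hneg (-1 + -(i : ℕ)) (by omega)]

lemma hessenbergDet_succ (ha0 : a 0 = 1) (hneg : ∀ t < 0, a t = 0) (m : ℕ) :
    hessenbergDet a (m + 1) =
      ∑ j : Fin (m + 1), (-1) ^ (j : ℕ) * a (j + 1) * hessenbergDet a (m - j) := by
  rw [hessenbergDet, Matrix.det_succ_row_zero]
  refine Fintype.sum_congr _ _ fun j => ?_
  have hminor : (Matrix.of fun i l : Fin (m + 1) => a (1 + l - i)).submatrix Fin.succ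
      j.succAbove = Matrix.of fun i l : Fin m => a (j.succAbove l - i) := by
    ext i l
    simp only [Matrix.submatrix_apply, Matrix.of_apply, Fin.val_succ]
    push_cast; ring_nf
  rw [hminor, det_succAbove_eq_hessenbergDet ha0 hneg, Matrix.of_apply, Fin.val_zero, Nat.cast_zero,
    sub_zero, add_comm]

lemma hessenbergDetZ_eq_sum (ha0 : a 0 = 1) (hneg : ∀ t < 0, a t = 0) {k : ℕ}
    (hk : ∀ t > (k : ℤ), a t = 0) {m : ℤ} (hm : 1 ≤ m) :
    hessenbergDetZ a m =
      ∑ j : Fin k, (-1) ^ (j : ℕ) * a (j + 1) * hessenbergDetZ a (m - 1 - j) := by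
  set f : ℕ → R := fun j => (-1) ^ j * a (j + 1) * hessenbergDetZ a (m - 1 - j)
  obtain ⟨M, rfl⟩ : ∃ M : ℕ, m = M + 1 := ⟨(m - 1).toNat, by omega⟩
  have hsucc : hessenbergDetZ a (M + 1) = ∑ j ∈ range (M + 1), f j := by
    rw [← Fin.sum_univ_eq_sum_range, ← Nat.cast_succ, hessenbergDetZ_natCast,
      hessenbergDet_succ ha0 hneg]
    refine Fintype.sum_congr _ _ fun j => ?_
    simp only [f]
    rw [show (M : ℤ) + 1 - 1 - j = (M - j : ℕ) by omega, hessenbergDetZ_natCast]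
  have hvanish : ∀ j, min (M + 1) k ≤ j → f j = 0 := by
    intro j hj
    rcases min_le_iff.mp hj with hj | hj
    · simp [f, hessenbergDetZ_of_neg a (show (M : ℤ) - j < 0 by omega)]
    · simp [f, hk (j + 1) (by omega)]
  have htrunc : ∀ N, min (M + 1) k ≤ N →
      ∑ j ∈ range N, f j = ∑ j ∈ range (min (M + 1) k), f j := fun N hN =>
    (sum_subset (range_subset_range.mpr hN) fun j _ hj =>
      hvanish j (not_lt.mp (hj ∘ mem_range.mpr))).symm
  rw [Fin.sum_univ_eq_sum_range f, hsucc, htrunc _ (min_le_left _ _),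
    htrunc _ (min_le_right _ _)]

end HessenbergDet

section JacobiTrudiRect

variable {R : Type*} [CommRing R] (h : ℤ → R)

def jacobiTrudiRect (k r : ℕ) : Matrix (Fin k) (Fin k) R :=
  Matrix.of fun i j => h (r + j - i)

variable {h}

lemma det_jacobiTrudiRect_zero (h0 : h 0 = 1) (hneg : ∀ t < 0, h t = 0) (k : ℕ) :
    (jacobiTrudiRect h k 0).det = 1 := by
  rw [Matrix.det_of_isUpperTriangular]
  · simp [jacobiTrudiRect, h0]
  · intro i j (hji : j < i)
    simp only [jacobiTrudiRect, Matrix.of_apply]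
    exact hneg _ (by have := Fin.lt_def.mp hji; omega)

lemma det_jacobiTrudiRect_succ {k : ℕ} (c : Fin (k + 1) → R)
    (hrec : ∀ m ≥ 1, h m = ∑ j, c j * h (m - 1 - j)) (r : ℕ) :
    (jacobiTrudiRect h (k + 1) (r + 1)).det =
      (-1) ^ k * c (Fin.last k) * (jacobiTrudiRect h (k + 1) r).det := by
  -- Rotating the columns of the matrix for `r` gives the one for `r + 1` except in the last
  -- column, which by the recurrence is a combination of the rotated columns; its coefficient on
  -- the last of them (the old first column) is `c (Fin.last k)`.
  set ρ := finRotate (k + 1)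
  set B := (jacobiTrudiRect h (k + 1) r).submatrix id ρ
  have hρ : ∀ j, j ≠ Fin.last k → (ρ j : ℤ) = j + 1 := fun j hj => by
    simp [ρ, finRotate_apply, Fin.val_add_one, hj]
  have hlast : ∀ i, ∑ j, (c ∘ Fin.revPerm ∘ ρ) j • B i j = h (r + 1 + k - i) := by
    intro i
    rw [hrec _ (by have := i.is_le; omega), ← Equiv.sum_comp (ρ.trans Fin.revPerm)
      fun j => c j * h (r + 1 + k - i - 1 - j)]
    refine Fintype.sum_congr _ _ fun j => ?_
    simp only [Function.comp_apply, smul_eq_mul, B, Matrix.submatrix_apply, id, jacobiTrudiRect,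
      Matrix.of_apply, Equiv.trans_apply, Fin.revPerm_apply, Fin.val_rev]
    congr 2
    have := (ρ j).is_le
    omega
  have hupd : jacobiTrudiRect h (k + 1) (r + 1) =
      B.updateCol (Fin.last k) fun i => ∑ j, (c ∘ Fin.revPerm ∘ ρ) j • B i j := by
    ext i j
    by_cases hj : j = Fin.last k
    · rw [hj, Matrix.updateCol_self, hlast]
      simp [jacobiTrudiRect]
    · simp only [Matrix.updateCol_ne hj, B, Matrix.submatrix_apply, jacobiTrudiRect,
        Matrix.of_apply, id, hρ j hj]
      push_cast; ring_nf
  rw [hupd, Matrix.det_updateCol_sum, Matrix.det_permute', sign_finRotate]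
  simp only [Function.comp_apply, ρ, finRotate_last, Fin.revPerm_apply, Fin.rev_zero, smul_eq_mul,
    Nat.add_sub_cancel, Units.val_pow_eq_pow_val, Units.val_neg, Units.val_one]
  push_cast
  ring

lemma det_jacobiTrudiRect (h0 : h 0 = 1) (hneg : ∀ t < 0, h t = 0) {k : ℕ}
    (c : Fin (k + 1) → R) (hrec : ∀ m ≥ 1, h m = ∑ j, c j * h (m - 1 - j)) (r : ℕ) :
    (jacobiTrudiRect h (k + 1) r).det = ((-1) ^ k * c (Fin.last k)) ^ r := by
  induction r with
  | zero => rw [pow_zero, det_jacobiTrudiRect_zero h0 hneg]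
  | succ r ih => rw [det_jacobiTrudiRect_succ c hrec, ih, pow_succ, mul_comm]

end JacobiTrudiRect

section Symmetric

variable (k : ℕ)

lemma epolyZ_zero : epolyZ k 0 = 1 := by simp [epolyZ]

lemma epolyZ_of_neg {t : ℤ} (ht : t < 0) : epolyZ k t = 0 := by
  simp only [epolyZ]
  rw [if_neg (by omega), dif_neg (by omega)]

lemma epolyZ_of_gt {t : ℤ} (ht : (k : ℤ) < t) : epolyZ k t = 0 := by
  simp only [epolyZ]
  rw [if_neg (by omega), dif_neg (by omega)]

lemma hpolyDZ_natCast (m : ℕ) : hpolyDZ k m = hpolyD k m :=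
  hessenbergDetZ_natCast _ m

lemma hpolyDZ_eq_sum {m : ℤ} (hm : 1 ≤ m) :
    hpolyDZ k m = ∑ j : Fin k, (-1) ^ (j : ℕ) * epolyZ k (j + 1) * hpolyDZ k (m - 1 - j) :=
  hessenbergDetZ_eq_sum (epolyZ_zero k) (fun _ => epolyZ_of_neg k)
    (fun _ => epolyZ_of_gt k) hm

lemma det_jacobiTrudiRect_hpolyDZ (r : ℕ) :
    (jacobiTrudiRect (hpolyDZ k) k r).det = epolyZ k k ^ r := by
  cases k with
  | zero => simp [epolyZ_zero]
  | succ k =>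
    rw [det_jacobiTrudiRect ((hpolyDZ_natCast _ 0).trans (hessenbergDet_zero _))
      (fun _ => hessenbergDetZ_of_neg _) _
      (fun _ => hpolyDZ_eq_sum (k + 1))]
    simp only [Fin.val_last, ← mul_assoc, ← mul_pow, neg_one_mul, neg_neg, one_pow, one_mul]
    push_cast; rfl

end Symmetric

section QuantumCohomology

variable {k n : ℕ}

lemma hClass_eq_zero {m : ℕ} (h1 : n - k < m) (h2 : m < n) : hClass k n m = 0 :=
  Ideal.Quotient.eq_zero_iff_mem.mpr <| Ideal.subset_span <| Or.inl ⟨m, ⟨h1, h2⟩, rfl⟩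

lemma hClass_self : hClass k n n = -(-1) ^ k * qClass k n := by
  have hmem : hpolyD k n + ((-1) ^ k : ℤ) • MvPolynomial.X none ∈ qIdeal k n :=
    Ideal.subset_span (Or.inr rfl)
  have := Ideal.Quotient.eq_zero_iff_mem.mpr hmem
  rw [map_add, map_zsmul, zsmul_eq_mul] at this
  push_cast at this
  rw [hClass, qClass]
  linear_combination this

lemma eClass_mul_hClass (hk : 1 ≤ k) (hkn : k < n) :
    eClass k n k * hClass k n (n - k) = qClass k n := by
  obtain ⟨k, rfl⟩ : ∃ k', k = k' + 1 := ⟨k - 1, by omega⟩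
  have hrec := congrArg (Ideal.Quotient.mk (qIdeal (k + 1) n))
    (hpolyDZ_eq_sum (k + 1) (m := n) (by omega))
  rw [map_sum, Fin.sum_univ_castSucc, Fintype.sum_eq_zero _ fun j => ?_, zero_add] at hrec
  · rw [Fin.val_last, show (n : ℤ) - 1 - k = (n - (k + 1) : ℕ) by omega, hpolyDZ_natCast,
      hpolyDZ_natCast] at hrec
    have hrec' : hClass (k + 1) n n =
        (-1) ^ k * (eClass (k + 1) n (k + 1) * hClass (k + 1) n (n - (k + 1))) := by
      simp [hClass, eClass, hrec, mul_assoc]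
    refine (isUnit_neg_one.pow k).mul_left_cancel ?_
    rw [← hrec', hClass_self, pow_succ]
    ring
  · rw [Fin.val_castSucc, show (n : ℤ) - 1 - (j : ℕ) = (n - 1 - j : ℕ) by omega,
      hpolyDZ_natCast, map_mul]
    exact mul_eq_zero_of_right _ (hClass_eq_zero (by omega) (by omega))

lemma hClass_pow_eq_sigmaClass (hkn : k ≤ n) :
    hClass k n (n - k) ^ k = sigmaClass k n (fun _ => n - k) := by
  rw [sigmaClass, RingHom.map_det, Matrix.det_of_isLowerTriangular]
  · simp [hpolyDZ_natCast, hClass]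
  · intro i j (hij : i < j)
    have := Fin.lt_def.mp hij
    simp only [RingHom.mapMatrix_apply, Matrix.map_apply, Matrix.of_apply]
    rw [show ((n - k : ℕ) : ℤ) + j - i = (n - k + j - i : ℕ) by omega, hpolyDZ_natCast]
    exact hClass_eq_zero (by omega) (by omega)

lemma eClass_pow_eq_sigmaClass : eClass k n k ^ (n - k) = sigmaClass k n (fun _ => n - k) := by
  rw [sigmaClass, ← jacobiTrudiRect, det_jacobiTrudiRect_hpolyDZ, map_pow]
  rfl

end QuantumCohomology

/-- In `QH*(Gr_{kn})` the classes `E = σ_{1^k}` and `H = σ_{(n-k)}` satisfy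
`E^n = q^k`, `H^n = q^{n-k}`, `E*H = q`, and `E^{n-k} = H^k = σ_{(n-k)^k}`
(the class of a point). -/
theorem E_H_relations (k n : ℕ) (hk : 1 ≤ k) (hkn : k < n) :
    eClass k n k ^ n = qClass k n ^ k ∧
    hClass k n (n - k) ^ n = qClass k n ^ (n - k) ∧
    eClass k n k * hClass k n (n - k) = qClass k n ∧
    eClass k n k ^ (n - k) = hClass k n (n - k) ^ k ∧
    hClass k n (n - k) ^ k = sigmaClass k n (fun _ => n - k) := by
  have hEH := eClass_mul_hClass hk hkn
  have hH := hClass_pow_eq_sigmaClass (n := n) hkn.le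
  have hE := (eClass_pow_eq_sigmaClass (k := k) (n := n)).trans hH.symm
  refine ⟨?_, ?_, hEH, hE, hH⟩
  · rw [← pow_sub_mul_pow _ hkn.le, hE, ← mul_pow, mul_comm, hEH]
  · rw [← pow_sub_mul_pow _ hkn.le, ← hE, ← mul_pow, mul_comm, hEH]
end

section
/- D_min(λ,μ) = max_{i=−k,...,n−k} (diag_i(λ) − diag_i(μ∨)), where diag_i denotes the number of boxes on the i-th diagonal of the Young diagram. -/
open Finset

/-! For `0 ≤ m ≤ n`, `φ_m(ν)` counts the rows `a` whose `1` in the 01-word sits at a position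
`ν_a + k - a ≤ m`. Within the strip of rows `a ≥ k - m` these are exactly the rows that do not
reach the diagonal `m - k`, so `diag_{m-k}(λ) = min(m, k) - φ_m(λ)`. Reflecting the rectangle by
`a ↦ k - 1 - a` gives in the same way `diag_{m-k}(μ∨) = φ_{n-m}(μ) - (k - m)` (truncated), and
`φ_{n-m}(μ) = φ_{-m}(μ) + k`. Hence `diag_{m-k}(λ) - diag_{m-k}(μ∨) = -(φ_m(λ) + φ_{-m}(μ))`, and
since `i ↦ φ_i(λ) + φ_{-i}(μ)` is `n`-periodic, both sides range over the same values. -/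

namespace PknFinset

variable {k n : ℕ} {ν : Fin k → ℕ}

lemma le_of_mem (h : ν ∈ PknFinset k n) (a : Fin k) : ν a ≤ n - k := by
  simp only [PknFinset, Finset.mem_filter, Finset.mem_image, Finset.mem_univ, true_and] at h
  obtain ⟨⟨f, rfl⟩, -⟩ := h
  exact Nat.lt_succ_iff.mp (f a).2

lemma antitone_of_mem (h : ν ∈ PknFinset k n) : Antitone ν :=
  fun a b hab => (Finset.mem_filter.mp h).2 a b hab

end PknFinset

section Diagonals

variable {k n : ℕ}

lemma phi_add_mul (hn : n ≠ 0) (ν : Fin k → ℕ) (i m : ℤ) :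
    phi n ν (i + n * m) = phi n ν i + k * m := by
  unfold phi
  rw [Int.add_mul_emod_self_left, Int.add_mul_ediv_left i m (by exact_mod_cast hn)]
  ring

lemma card_omegaWord_lt {ν : Fin k → ℕ} (hν : Antitone ν) (hbound : ∀ a, ν a ≤ n - k)
    (hkn : k ≤ n) (m : ℕ) :
    #{j : Fin n | (j : ℕ) < m ∧ omegaWord n ν j = true} = #{a : Fin k | ν a + (k - a) ≤ m} := by
  have hpos_strictAnti : StrictAnti fun a : Fin k => ν a + (k - a) := by
    intro a b hab
    have := hν hab.le
    have : (a : ℕ) < b := hab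
    have := b.isLt
    dsimp only
    omega
  symm
  refine Finset.card_bij (fun a _ => ⟨ν a + (k - a) - 1, by have := hbound a; omega⟩) ?_ ?_ ?_
  · intro a ha
    simp only [Finset.mem_filter, Finset.mem_univ, true_and, omegaWord, decide_eq_true_eq] at ha ⊢
    exact ⟨by omega, a, by omega⟩
  · intro a _ b _ hab
    refine hpos_strictAnti.injective (show ν a + (k - a) = ν b + (k - b) from ?_)
    simp only [Fin.mk.injEq] at hab
    have := a.2; have := b.2
    omega
  · intro j hj
    simp only [Finset.mem_filter, Finset.mem_univ, true_and, omegaWord, decide_eq_true_eq] at hj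
    obtain ⟨hjm, a, ha⟩ := hj
    exact ⟨a, by simp only [Finset.mem_filter, Finset.mem_univ, true_and]; omega,
      Fin.ext (by simp only; omega)⟩

lemma phi_natCast {ν : Fin k → ℕ} (hν : Antitone ν) (hbound : ∀ a, ν a ≤ n - k)
    (hkn : k ≤ n) {m : ℕ} (hm : m ≤ n) :
    phi n ν m = #{a : Fin k | ν a + (k - a) ≤ m} := by
  rcases hm.lt_or_eq with hm | rfl
  · have hmod : (m : ℤ) % n = m := Int.emod_eq_of_lt (by positivity) (by exact_mod_cast hm)
    have hdiv : (m : ℤ) / n = 0 := Int.ediv_eq_zero_of_lt (by positivity) (by exact_mod_cast hm)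
    rw [phi, hmod, hdiv, mul_zero, add_zero, ← card_omegaWord_lt hν hbound hkn]
    simp only [Nat.cast_lt]
  · have hall : #{a : Fin k | ν a + (k - a) ≤ m} = k := by
      rw [Finset.filter_true_of_mem fun a _ => by have := hbound a; omega, Finset.card_univ,
        Fintype.card_fin]
    rcases Nat.eq_zero_or_pos m with rfl | hm
    · obtain rfl : k = 0 := by omega
      simp [phi]
    · simp [phi, hall, Int.ediv_self (show (m : ℤ) ≠ 0 by omega)]

lemma card_filter_le_val_add (m : ℕ) : #{a : Fin k | k ≤ (a : ℕ) + m} = min m k := by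
  rw [Finset.filter_congr (q := fun a : Fin k => ¬ (a : ℕ) < k - m) (fun a _ => by omega),
    Finset.filter_not, Finset.card_sdiff_of_subset (Finset.filter_subset _ _),
    Fin.card_filter_val_lt, Finset.card_fin]
  omega

lemma diagI_sub_add_card (ν : Fin k → ℕ) (m : ℕ) :
    diagI ν (m - k) + #{a : Fin k | ν a + (k - a) ≤ m} = min m k := by
  have hdiag : diagI ν (m - k) = #{a : Fin k | k ≤ (a : ℕ) + m ∧ ¬ ν a + (k - a) ≤ m} := by
    unfold diagI
    congr 1
    refine Finset.filter_congr fun a _ => ?_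
    have := a.2
    omega
  have hpos : #{a : Fin k | ν a + (k - a) ≤ m}
      = #{a : Fin k | k ≤ (a : ℕ) + m ∧ ν a + (k - a) ≤ m} := by
    congr 1
    exact Finset.filter_congr fun a _ => by omega
  rw [hdiag, hpos, ← card_filter_le_val_add m, ← Finset.filter_filter, ← Finset.filter_filter, add_comm,
    Finset.card_filter_add_card_filter_not]

lemma diagI_complP_sub {ν : Fin k → ℕ} (hbound : ∀ a, ν a ≤ n - k) (m : ℕ) :
    diagI (complP n k ν) (m - k) = #{b : Fin k | (b : ℕ) < m ∧ ν b + (k - b) ≤ n - m} := by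
  unfold diagI
  refine Finset.card_nbij' Fin.rev Fin.rev (fun a ha => ?_) (fun b hb => ?_)
    (fun a _ => Fin.rev_rev a) (fun b _ => Fin.rev_rev b)
  · simp only [Finset.mem_coe, Finset.mem_filter, Finset.mem_univ, true_and] at ha ⊢
    have := hbound a.rev
    have := Fin.val_rev a
    simp only [complP] at ha
    omega
  · simp only [Finset.mem_coe, Finset.mem_filter, Finset.mem_univ, true_and] at hb ⊢
    have := hbound b
    have := Fin.val_rev b
    simp only [complP, Fin.rev_rev]
    omega

lemma diagI_complP_sub_add {ν : Fin k → ℕ} (hbound : ∀ a, ν a ≤ n - k) (hkn : k ≤ n) {m : ℕ}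
    (hm : m ≤ n) :
    diagI (complP n k ν) (m - k) + (k - m) = #{b : Fin k | ν b + (k - b) ≤ n - m} := by
  have hrows_ge : #{b : Fin k | ν b + (k - b) ≤ n - m ∧ ¬ (b : ℕ) < m} = k - m := by
    rw [Finset.filter_congr (q := fun b : Fin k => ¬ (b : ℕ) < m)
        (fun b _ => by have := hbound b; have := b.isLt; omega),
      Finset.filter_not, Finset.card_sdiff_of_subset (Finset.filter_subset _ _),
      Fin.card_filter_val_lt, Finset.card_fin]
    omega
  rw [diagI_complP_sub hbound, ← hrows_ge, ← Finset.card_filter_add_card_filter_not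
    (s := ({b | ν b + (k - b) ≤ n - m} : Finset (Fin k))) (fun b : Fin k => (b : ℕ) < m),
    Finset.filter_filter, Finset.filter_filter]
  simp only [and_comm]

lemma phi_add_phi_neg_emod (hn : n ≠ 0) (lam mu : Fin k → ℕ) (i : ℤ) :
    phi n lam i + phi n mu (-i) = phi n lam (i % n) + phi n mu (-(i % n)) := by
  have hi : i = i % n + n * (i / n) := (Int.emod_add_mul_ediv i n).symm
  have hni : -i = -(i % n) + n * -(i / n) := by linear_combination -hi
  have hlam := phi_add_mul hn lam (i % n) (i / n)
  have hmu := phi_add_mul hn mu (-(i % n)) (-(i / n))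
  rw [← hi] at hlam
  rw [← hni] at hmu
  linarith

lemma diagI_sub_diagI_complP (hkn : k < n) {lam mu : Fin k → ℕ}
    (hlam : Antitone lam) (hlam_le : ∀ a, lam a ≤ n - k)
    (hmu : Antitone mu) (hmu_le : ∀ a, mu a ≤ n - k) {m : ℤ} (hm0 : 0 ≤ m) (hmn : m ≤ n) :
    (diagI lam (m - k) : ℤ) - diagI (complP n k mu) (m - k) = -(phi n lam m + phi n mu (-m)) := by
  lift m to ℕ using hm0
  have hmn : m ≤ n := by exact_mod_cast hmn
  have hlam_diag := diagI_sub_add_card lam m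
  have hmu_diag := diagI_complP_sub_add hmu_le hkn.le hmn
  have hlam_phi := phi_natCast hlam hlam_le hkn.le hmn
  have hmu_phi := phi_natCast hmu hmu_le hkn.le (Nat.sub_le n m)
  have hmu_shift : phi n mu (-m) = phi n mu ((n - m : ℕ) : ℤ) - k := by
    have := phi_add_mul (Nat.ne_zero_of_lt hkn) mu ((n - m : ℕ) : ℤ) (-1)
    rw [show ((n - m : ℕ) : ℤ) + n * -1 = -m by omega] at this
    omega
  omega

end Diagonals

theorem Dmin_eq_max_diag_general (k n : ℕ) (hkn : k < n)
    (lam mu : Fin k → ℕ) (hlam : lam ∈ PknFinset k n) (hmu : mu ∈ PknFinset k n)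
    (Dmin : ℤ)
    (hmin : IsGreatest {v : ℤ | ∃ i : ℤ, v = -(phi n lam i + phi n mu (-i))} Dmin) :
    IsGreatest {v : ℤ | ∃ i : ℤ, -(k : ℤ) ≤ i ∧ i ≤ (n : ℤ) - k ∧
      v = (diagI lam i : ℤ) - (diagI (complP n k mu) i : ℤ)} Dmin := by
  have key {m : ℤ} (hm0 : 0 ≤ m) (hmn : m ≤ n) :=
    diagI_sub_diagI_complP hkn (PknFinset.antitone_of_mem hlam) (PknFinset.le_of_mem hlam)
      (PknFinset.antitone_of_mem hmu) (PknFinset.le_of_mem hmu) hm0 hmn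
  convert hmin using 2
  ext v
  constructor
  · rintro ⟨i, hik, hin, rfl⟩
    exact ⟨i + k, by simpa using key (m := i + k) (by omega) (by omega)⟩
  · rintro ⟨i, rfl⟩
    have hi0 := Int.emod_nonneg i (by omega : (n : ℤ) ≠ 0)
    have hin := Int.emod_lt_of_pos i (by omega : (0 : ℤ) < n)
    refine ⟨i % n - k, by omega, by omega, ?_⟩
    rw [phi_add_phi_neg_emod (Nat.ne_zero_of_lt hkn), ← key hi0 hin.le]

/-- `D_min(λ,μ) = max_{i = -k,…,n-k} (diag_i(λ) - diag_i(μ∨))`, where `diag_i` is the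
number of boxes on the `i`-th diagonal of the Young diagram. -/
theorem Dmin_eq_max_diag (k n : ℕ) (hk : 1 ≤ k) (hkn : k < n)
    (lam mu : Fin k → ℕ) (hlam : lam ∈ PknFinset k n) (hmu : mu ∈ PknFinset k n)
    (Dmin : ℤ)
    (hmin : IsGreatest {v : ℤ | ∃ i : ℤ, v = -(phi n lam i + phi n mu (-i))} Dmin) :
    IsGreatest {v : ℤ | ∃ i : ℤ, -(k : ℤ) ≤ i ∧ i ≤ (n : ℤ) - k ∧
      v = (diagI lam i : ℤ) - (diagI (complP n k mu) i : ℤ)} Dmin :=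
  Dmin_eq_max_diag_general k n hkn lam mu hlam hmu Dmin hmin
end

section
/- In the affine nil-Temperley-Lieb algebra A_n, the elements z_k = e_k · h_{n−k} (1 ≤ k ≤ n−1) are central, and z_k · z_l = 0 for k ≠ l. -/
/-!
Write `word l` for the product of the generators along a list `l`. For a proper subset `I`,
`cwProd I` and `ccwProd I` are the words obtained by walking once around `ℤ/nℤ` from any point
outside `I`; the choice of that point does not matter because the two arcs cut out by two such
points consist of pairwise commuting generators.

Everything rests on one vanishing lemma: `a_i v a_i = 0` whenever the word `v` avoids `i` and one
of its neighbours. It gives `cwProd I * ccwProd J = 0` as soon as `I ∩ J ≠ ∅`, so that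
`z_k = ∑_{|I| = k} w_I` with `w_I = cwProd I * ccwProd Iᶜ`, a word containing every generator
once. The same lemma shows `a_j w_I = 0` unless `j ∉ I ∋ j + 1`, `w_I a_j = 0` unless
`j ∈ I ∌ j + 1`, and `w_I w_J = 0` for `I ≠ J`. In the remaining case `a_j w_I = w_{s I} a_j`,
where `s` exchanges `j` and `j + 1`; summing over `I` gives `a_j z_k = z_k a_j`.
-/

open Finset

/-- The defining relations of the affine nil-Temperley-Lieb algebra `A_n`. -/
inductive NTLRel (n : ℕ) : FreeAlgebra ℤ (ZMod n) → FreeAlgebra ℤ (ZMod n) → Prop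
  | sq (i : ZMod n) : NTLRel n (FreeAlgebra.ι ℤ i * FreeAlgebra.ι ℤ i) 0
  | tri1 (i : ZMod n) :
      NTLRel n (FreeAlgebra.ι ℤ i * FreeAlgebra.ι ℤ (i + 1) * FreeAlgebra.ι ℤ i) 0
  | tri2 (i : ZMod n) :
      NTLRel n (FreeAlgebra.ι ℤ (i + 1) * FreeAlgebra.ι ℤ i * FreeAlgebra.ι ℤ (i + 1)) 0
  | comm (i j : ZMod n) : i - j ≠ 1 → j - i ≠ 1 →
      NTLRel n (FreeAlgebra.ι ℤ i * FreeAlgebra.ι ℤ j) (FreeAlgebra.ι ℤ j * FreeAlgebra.ι ℤ i)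

/-- The affine nil-Temperley-Lieb algebra `A_n`. -/
abbrev NTL (n : ℕ) := RingQuot (NTLRel n)

/-- The generator `a_i` of `A_n`. -/
def ntlGen (n : ℕ) (i : ZMod n) : NTL n := RingQuot.mkRingHom (NTLRel n) (FreeAlgebra.ι ℤ i)

/-- The clockwise-ordered product `∏^↻_{i ∈ I} a_i`, computed by scanning positions
`t + (n-1), t + (n-2), …, t + 1` for a base point `t ∉ I` (so that `a_{i+1}` precedes
`a_i` whenever `i, i+1 ∈ I`). -/
def cwProdAt (n : ℕ) [NeZero n] (t : ZMod n) (I : Finset (ZMod n)) : NTL n :=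
  ((List.range (n - 1)).map (fun s =>
    if (t + ((n - 1 - s : ℕ) : ZMod n)) ∈ I then ntlGen n (t + ((n - 1 - s : ℕ) : ZMod n))
    else 1)).prod

/-- The counterclockwise-ordered product `∏^↺_{i ∈ I} a_i` (so that `a_i` precedes
`a_{i+1}` whenever `i, i+1 ∈ I`). -/
def ccwProdAt (n : ℕ) [NeZero n] (t : ZMod n) (I : Finset (ZMod n)) : NTL n :=
  ((List.range (n - 1)).map (fun s =>
    if (t + ((s + 1 : ℕ) : ZMod n)) ∈ I then ntlGen n (t + ((s + 1 : ℕ) : ZMod n))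
    else 1)).prod

/-- `∏^↻_{i ∈ I} a_i` for a proper subset `I ⊂ ℤ/nℤ` (and `0` otherwise). -/
noncomputable def cwProd (n : ℕ) [NeZero n] (I : Finset (ZMod n)) : NTL n :=
  if h : ∃ t : ZMod n, t ∉ I then cwProdAt n h.choose I else 0

/-- `∏^↺_{i ∈ I} a_i` for a proper subset `I ⊂ ℤ/nℤ` (and `0` otherwise). -/
noncomputable def ccwProd (n : ℕ) [NeZero n] (I : Finset (ZMod n)) : NTL n :=
  if h : ∃ t : ZMod n, t ∉ I then ccwProdAt n h.choose I else 0

/-- The noncommutative elementary symmetric function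
`e_r = ∑_{|I| = r} ∏^↻_{i ∈ I} a_i ∈ A_n`. -/
noncomputable def eNTL (n : ℕ) [NeZero n] (r : ℕ) : NTL n :=
  ∑ I ∈ Finset.powersetCard r (Finset.univ : Finset (ZMod n)), cwProd n I

/-- The noncommutative complete homogeneous symmetric function
`h_r = ∑_{|I| = r} ∏^↺_{i ∈ I} a_i ∈ A_n`. -/
noncomputable def hNTL (n : ℕ) [NeZero n] (r : ℕ) : NTL n :=
  ∑ I ∈ Finset.powersetCard r (Finset.univ : Finset (ZMod n)), ccwProd n I

namespace NTL

variable {n : ℕ}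

def word (l : List (ZMod n)) : NTL n := (l.map (ntlGen n)).prod

@[simp] theorem word_nil : word ([] : List (ZMod n)) = 1 := rfl

@[simp] theorem word_cons (x : ZMod n) (l : List (ZMod n)) :
    word (x :: l) = ntlGen n x * word l := List.prod_cons

@[simp] theorem word_append (l₁ l₂ : List (ZMod n)) : word (l₁ ++ l₂) = word l₁ * word l₂ := by
  simp [word]

theorem ntlGen_mul_self (i : ZMod n) : ntlGen n i * ntlGen n i = 0 := by
  simpa [ntlGen] using RingQuot.mkRingHom_rel (NTLRel.sq i)

theorem ntlGen_mul_ntlGen_mul_ntlGen {i k : ZMod n} (hk : k = i + 1 ∨ k = i - 1) :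
    ntlGen n i * ntlGen n k * ntlGen n i = 0 := by
  rcases hk with rfl | rfl
  · simpa [ntlGen] using RingQuot.mkRingHom_rel (NTLRel.tri1 i)
  · have h := RingQuot.mkRingHom_rel (NTLRel.tri2 (i - 1))
    rw [sub_add_cancel] at h
    simpa [ntlGen] using h

theorem commute_ntlGen {i j : ZMod n} (h₁ : j ≠ i + 1) (h₂ : j ≠ i - 1) :
    Commute (ntlGen n i) (ntlGen n j) := by
  have h := RingQuot.mkRingHom_rel
    (NTLRel.comm i j (fun h => h₂ (by rw [← h]; ring)) (fun h => h₁ (by rw [← h]; ring)))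
  simpa [ntlGen, Commute, SemiconjBy] using h

theorem commute_ntlGen_word {i : ZMod n} {l : List (ZMod n)}
    (h : ∀ x ∈ l, x ≠ i + 1 ∧ x ≠ i - 1) : Commute (ntlGen n i) (word l) :=
  Commute.list_prod_right _ _ fun y hy => by
    obtain ⟨x, hx, rfl⟩ := List.mem_map.mp hy
    exact commute_ntlGen (h x hx).1 (h x hx).2

theorem commute_word {l₁ l₂ : List (ZMod n)}
    (h : ∀ x ∈ l₁, ∀ y ∈ l₂, y ≠ x + 1 ∧ y ≠ x - 1) : Commute (word l₁) (word l₂) :=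
  Commute.list_prod_left _ _ fun z hz => by
    obtain ⟨x, hx, rfl⟩ := List.mem_map.mp hz
    exact commute_ntlGen_word (h x hx)

theorem commute_of_forall_commute_ntlGen {z : NTL n} (h : ∀ i, Commute z (ntlGen n i))
    (x : NTL n) : Commute z x := by
  obtain ⟨y, rfl⟩ := RingQuot.mkAlgHom_surjective ℤ (NTLRel n) x
  induction y using FreeAlgebra.induction with
  | grade0 r =>
    rw [AlgHom.commutes]
    exact Algebra.commute_algebraMap_right r z
  | grade1 i =>
    convert h i using 1
    exact RingHom.congr_fun (RingQuot.mkAlgHom_coe ℤ (NTLRel n)) _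
  | mul a b ha hb =>
    rw [map_mul]
    exact ha.mul_right hb
  | add a b ha hb =>
    rw [map_add]
    exact ha.add_right hb

/-- Let `m` be the other neighbour of `i`. If `v` contains at most one `m`, then `a_i` commutes
with the rest of `v` and `a_i a_m a_i = 0` or `a_i² = 0` applies; otherwise the part of `v`
between its first two `m`s avoids `m` and `i`, and induction applies to it. -/
theorem ntlGen_mul_word_mul_ntlGen {i k : ZMod n} (hk : k = i + 1 ∨ k = i - 1)
    {v : List (ZMod n)} (hiv : i ∉ v) (hkv : k ∉ v) : ntlGen n i * word v * ntlGen n i = 0 := by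
  induction hlen : v.length using Nat.strong_induction_on generalizing i k v with
  | _ N ih =>
  obtain ⟨m, hkm⟩ : ∃ m, (k = i + 1 ∧ m = i - 1) ∨ (k = i - 1 ∧ m = i + 1) := by
    rcases hk with h | h
    exacts [⟨_, .inl ⟨h, rfl⟩⟩, ⟨_, .inr ⟨h, rfl⟩⟩]
  have hm : m = i + 1 ∨ m = i - 1 := by rcases hkm with ⟨-, h⟩ | ⟨-, h⟩ <;> simp [h]
  have hi : i = m + 1 ∨ i = m - 1 := by rcases hkm with ⟨-, rfl⟩ | ⟨-, rfl⟩ <;> simp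
  have hcomm : ∀ l : List (ZMod n), k ∉ l → m ∉ l → Commute (ntlGen n i) (word l) :=
    fun l hk hm => commute_ntlGen_word fun x hx => by
      rcases hkm with ⟨rfl, rfl⟩ | ⟨rfl, rfl⟩
      exacts [⟨ne_of_mem_of_not_mem hx hk, ne_of_mem_of_not_mem hx hm⟩,
        ⟨ne_of_mem_of_not_mem hx hm, ne_of_mem_of_not_mem hx hk⟩]
  by_cases hmv : m ∉ v
  · rw [(hcomm v hkv hmv).eq, mul_assoc, ntlGen_mul_self, mul_zero]
  obtain ⟨s, t, rfl, hms⟩ := List.eq_append_cons_of_mem (not_not.mp hmv)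
  simp only [List.mem_append, List.mem_cons, not_or] at hiv hkv
  by_cases hmt : m ∉ t
  · calc ntlGen n i * word (s ++ m :: t) * ntlGen n i
        = ntlGen n i * word s * ntlGen n m * (word t * ntlGen n i) := by
          simp only [word_append, word_cons, mul_assoc]
      _ = word s * (ntlGen n i * ntlGen n m * ntlGen n i) * word t := by
          rw [(hcomm s hkv.1 hms).eq, ← (hcomm t hkv.2.2 hmt).eq]
          simp only [mul_assoc]
      _ = 0 := by rw [ntlGen_mul_ntlGen_mul_ntlGen hm, mul_zero, zero_mul]
  obtain ⟨s', t', rfl, hms'⟩ := List.eq_append_cons_of_mem (not_not.mp hmt)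
  have hsand : ntlGen n m * word s' * ntlGen n m = 0 :=
    ih s'.length (by simp only [List.length_append, List.length_cons] at hlen; omega) hi hms'
      (fun h => hiv.2.2 (List.mem_append_left _ h)) rfl
  calc ntlGen n i * word (s ++ m :: (s' ++ m :: t')) * ntlGen n i
      = ntlGen n i * word s * (ntlGen n m * word s' * ntlGen n m) * word t' * ntlGen n i := by
        simp only [word_append, word_cons, mul_assoc]
    _ = 0 := by rw [hsand, mul_zero, zero_mul, zero_mul]

theorem word_append_cons_mul_word_append_cons {c k : ZMod n} (hk : k = c + 1 ∨ k = c - 1)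
    {u v v' w : List (ZMod n)} (hc : c ∉ v ++ v') (hk' : k ∉ v ++ v') :
    word (u ++ c :: v) * word (v' ++ c :: w) = 0 :=
  calc word (u ++ c :: v) * word (v' ++ c :: w)
      = word u * (ntlGen n c * word (v ++ v') * ntlGen n c) * word w := by
        simp only [word_append, word_cons, mul_assoc]
    _ = 0 := by rw [ntlGen_mul_word_mul_ntlGen hk hc hk', mul_zero, zero_mul]

def arc (a : ZMod n) (m : ℕ) : List (ZMod n) :=
  (List.range m).map fun s => a + ((s + 1 : ℕ) : ZMod n)

theorem mem_arc {a x : ZMod n} {m : ℕ} :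
    x ∈ arc a m ↔ ∃ k, 1 ≤ k ∧ k ≤ m ∧ a + (k : ZMod n) = x := by
  simp only [arc, List.mem_map, List.mem_range]
  constructor
  · rintro ⟨s, hs, rfl⟩
    exact ⟨s + 1, by omega, by omega, rfl⟩
  · rintro ⟨k, hk, hkm, rfl⟩
    exact ⟨k - 1, by omega, by rw [Nat.sub_add_cancel hk]⟩

theorem arc_add (a : ZMod n) (m m' : ℕ) :
    arc a (m + 1 + m') =
      arc a m ++ (a + ((m + 1 : ℕ) : ZMod n)) :: arc (a + ((m + 1 : ℕ) : ZMod n)) m' := by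
  simp only [arc, List.range_add, List.range_succ, List.map_append, List.map_map,
    List.append_assoc, List.map_cons, List.singleton_append]
  congr 3
  funext s
  simp only [Function.comp_apply]
  push_cast
  ring

theorem add_natCast_ne_add_natCast (a : ZMod n) {k l : ℕ} (hkl : k ≠ l) (hk : k < l + n)
    (hl : l < k + n) : a + (k : ZMod n) ≠ a + l := by
  rw [Ne, add_right_inj, ZMod.natCast_eq_natCast_iff]
  exact fun h => hkl (h.eq_of_abs_lt (by rw [abs_lt]; omega))

theorem prod_map_ite_eq_word (l : List (ZMod n)) (I : Finset (ZMod n)) :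
    (l.map fun x => if x ∈ I then ntlGen n x else 1).prod = word (l.filter (· ∈ I)) := by
  induction l with
  | nil => rfl
  | cons x l ih => by_cases hx : x ∈ I <;> simp [hx, ih]

variable [NeZero n]

theorem val_sub_add_val_sub {t c : ZMod n} (h : t ≠ c) : (c - t).val + (t - c).val = n := by
  rw [← neg_sub c t, ZMod.neg_val, if_neg (sub_ne_zero.mpr h.symm)]
  have := ZMod.val_lt (c - t)
  omega

/-- The two points `t ≠ c` cut the circle `ℤ/nℤ` into two arcs. -/
theorem arc_eq_append_cons {t c : ZMod n} (h : t ≠ c) :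
    arc t (n - 1) = arc t ((c - t).val - 1) ++ c :: arc c ((t - c).val - 1) := by
  have hsum := val_sub_add_val_sub h
  have hd : (c - t).val ≠ 0 := by rwa [Ne, ZMod.val_eq_zero, sub_eq_zero, eq_comm]
  have he : (t - c).val ≠ 0 := by rwa [Ne, ZMod.val_eq_zero, sub_eq_zero]
  have hc : t + (((c - t).val - 1 + 1 : ℕ) : ZMod n) = c := by
    rw [Nat.sub_add_cancel (by omega), ZMod.natCast_zmod_val, add_sub_cancel]
  rw [show n - 1 = (c - t).val - 1 + 1 + ((t - c).val - 1) by omega, arc_add, hc]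

theorem ne_of_mem_arc_left {t c x : ZMod n} (hx : x ∈ arc t ((c - t).val - 1)) :
    x ≠ c ∧ x ≠ c + 1 := by
  obtain ⟨k, hk, hkd, rfl⟩ := mem_arc.mp hx
  have hd := ZMod.val_lt (c - t)
  have hc : t + ((c - t).val : ZMod n) = c := by rw [ZMod.natCast_zmod_val]; ring
  refine ⟨fun h => ?_, fun h => ?_⟩
  · refine add_natCast_ne_add_natCast t (k := k) (l := (c - t).val) (by omega) (by omega)
      (by omega) ?_
    linear_combination h - hc
  · refine add_natCast_ne_add_natCast t (k := k) (l := (c - t).val + 1) (by omega) (by omega)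
      (by omega) ?_
    push_cast
    linear_combination h - hc

theorem ne_of_mem_arc_right {t c x : ZMod n} (hx : x ∈ arc c ((t - c).val - 1)) :
    x ≠ c ∧ x ≠ c - 1 := by
  obtain ⟨k, hk, hke, rfl⟩ := mem_arc.mp hx
  have he := ZMod.val_lt (t - c)
  refine ⟨fun h => ?_, fun h => ?_⟩
  · refine add_natCast_ne_add_natCast c (k := k) (l := 0) (by omega) (by omega) (by omega) ?_
    push_cast
    linear_combination h
  · refine add_natCast_ne_add_natCast c (k := k + 1) (l := n) (by omega) (by omega)
      (by omega) ?_
    push_cast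
    rw [ZMod.natCast_self]
    linear_combination h

theorem ne_add_one_and_ne_sub_one_of_mem_arc {t c x y : ZMod n}
    (hx : x ∈ arc t ((c - t).val - 1)) (hy : y ∈ arc c ((t - c).val - 1)) :
    y ≠ x + 1 ∧ y ≠ x - 1 := by
  obtain ⟨k, hk, hkd, rfl⟩ := mem_arc.mp hx
  obtain ⟨l, hl, hle, rfl⟩ := mem_arc.mp hy
  have htc : t ≠ c := by
    rintro rfl
    rw [sub_self, ZMod.val_zero] at hkd
    omega
  have hsum := val_sub_add_val_sub htc
  have hc : t + ((c - t).val : ZMod n) = c := by rw [ZMod.natCast_zmod_val]; ring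
  refine ⟨fun h => ?_, fun h => ?_⟩
  · refine add_natCast_ne_add_natCast t (k := (c - t).val + l) (l := k + 1) (by omega)
      (by omega) (by omega) ?_
    push_cast
    linear_combination h + hc
  · refine add_natCast_ne_add_natCast t (k := (c - t).val + l + 1) (l := k) (by omega)
      (by omega) (by omega) ?_
    push_cast
    linear_combination h + hc

theorem ccwProdAt_eq_word (t : ZMod n) (I : Finset (ZMod n)) :
    ccwProdAt n t I = word ((arc t (n - 1)).filter (· ∈ I)) := by
  rw [ccwProdAt, ← prod_map_ite_eq_word, arc, List.map_map]
  rfl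

theorem cwProdAt_eq_word (t : ZMod n) (I : Finset (ZMod n)) :
    cwProdAt n t I = word ((arc t (n - 1)).filter (· ∈ I)).reverse := by
  rw [cwProdAt, ← List.filter_reverse, ← prod_map_ite_eq_word, arc, ← List.map_reverse,
    List.range_eq_range', List.reverse_range', List.map_map, List.map_map,
    ← List.range_eq_range']
  congr 1
  refine List.map_congr_left fun s hs => ?_
  rw [List.mem_range] at hs
  simp only [Function.comp_apply]
  rw [show 0 + (n - 1) - 1 - s + 1 = n - 1 - s by omega]

theorem exists_filter_arc_eq_append {t t' : ZMod n} {I : Finset (ZMod n)} (h : t ≠ t')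
    (ht : t ∉ I) (ht' : t' ∉ I) :
    ∃ A B : List (ZMod n), (arc t (n - 1)).filter (· ∈ I) = A ++ B ∧
      (arc t' (n - 1)).filter (· ∈ I) = B ++ A ∧ ∀ x ∈ A, ∀ y ∈ B, y ≠ x + 1 ∧ y ≠ x - 1 :=
  ⟨(arc t ((t' - t).val - 1)).filter (· ∈ I), (arc t' ((t - t').val - 1)).filter (· ∈ I),
    by rw [arc_eq_append_cons h]; simp [ht'], by rw [arc_eq_append_cons h.symm]; simp [ht],
    fun _ hx _ hy => ne_add_one_and_ne_sub_one_of_mem_arc (List.mem_of_mem_filter hx)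
      (List.mem_of_mem_filter hy)⟩

theorem ccwProdAt_eq_ccwProdAt {t t' : ZMod n} {I : Finset (ZMod n)} (ht : t ∉ I)
    (ht' : t' ∉ I) : ccwProdAt n t I = ccwProdAt n t' I := by
  rcases eq_or_ne t t' with rfl | h
  · rfl
  obtain ⟨A, B, hA, hB, hAB⟩ := exists_filter_arc_eq_append h ht ht'
  rw [ccwProdAt_eq_word, ccwProdAt_eq_word, hA, hB, word_append, word_append,
    (commute_word hAB).eq]

theorem cwProdAt_eq_cwProdAt {t t' : ZMod n} {I : Finset (ZMod n)} (ht : t ∉ I)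
    (ht' : t' ∉ I) : cwProdAt n t I = cwProdAt n t' I := by
  rcases eq_or_ne t t' with rfl | h
  · rfl
  obtain ⟨A, B, hA, hB, hAB⟩ := exists_filter_arc_eq_append h ht ht'
  have hBA : ∀ y ∈ B.reverse, ∀ x ∈ A.reverse, x ≠ y + 1 ∧ x ≠ y - 1 := by
    simp only [List.mem_reverse]
    exact fun y hy x hx => ⟨fun h => (hAB x hx y hy).2 (by rw [h]; ring),
      fun h => (hAB x hx y hy).1 (by rw [h]; ring)⟩
  rw [cwProdAt_eq_word, cwProdAt_eq_word, hA, hB, List.reverse_append, List.reverse_append,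
    word_append, word_append, (commute_word hBA).eq]

theorem ccwProd_eq_word {t : ZMod n} {I : Finset (ZMod n)} (ht : t ∉ I) :
    ccwProd n I = word ((arc t (n - 1)).filter (· ∈ I)) := by
  have h : ∃ t, t ∉ I := ⟨t, ht⟩
  rw [ccwProd, dif_pos h, ccwProdAt_eq_ccwProdAt h.choose_spec ht, ccwProdAt_eq_word]

theorem cwProd_eq_word {t : ZMod n} {I : Finset (ZMod n)} (ht : t ∉ I) :
    cwProd n I = word ((arc t (n - 1)).filter (· ∈ I)).reverse := by
  have h : ∃ t, t ∉ I := ⟨t, ht⟩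
  rw [cwProd, dif_pos h, cwProdAt_eq_cwProdAt h.choose_spec ht, cwProdAt_eq_word]

@[simp] theorem ccwProd_univ : ccwProd n univ = 0 := dif_neg (by simp)

@[simp] theorem cwProd_univ : cwProd n univ = 0 := dif_neg (by simp)

theorem exists_ccwProd_eq_word_append_cons {t c : ZMod n} {I : Finset (ZMod n)} (ht : t ∉ I)
    (hc : c ∈ I) :
    ∃ lo hi : List (ZMod n), ccwProd n I = word (lo ++ c :: hi) ∧
      cwProd n I = word (hi.reverse ++ c :: lo.reverse) ∧
      (∀ x ∈ lo, x ∈ I ∧ x ≠ c ∧ x ≠ c + 1) ∧ ∀ x ∈ hi, x ∈ I ∧ x ≠ c ∧ x ≠ c - 1 := by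
  have hsplit : (arc t (n - 1)).filter (· ∈ I) = (arc t ((c - t).val - 1)).filter (· ∈ I) ++
      c :: (arc c ((t - c).val - 1)).filter (· ∈ I) := by
    rw [arc_eq_append_cons (ne_of_mem_of_not_mem hc ht).symm]
    simp [hc]
  refine ⟨_, _, by rw [ccwProd_eq_word ht, hsplit], by rw [cwProd_eq_word ht, hsplit]; simp,
    fun x hx => ?_, fun x hx => ?_⟩ <;> rw [List.mem_filter, decide_eq_true_iff] at hx
  exacts [⟨hx.2, ne_of_mem_arc_left hx.1⟩, ⟨hx.2, ne_of_mem_arc_right hx.1⟩]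

noncomputable def zSummand (I : Finset (ZMod n)) : NTL n := cwProd n I * ccwProd n Iᶜ

theorem zSummand_eq_zero {I : Finset (ZMod n)} (h : ¬(I.Nonempty ∧ Iᶜ.Nonempty)) :
    zSummand I = 0 := by
  rcases not_and_or.mp h with h | h <;> rw [not_nonempty_iff_eq_empty] at h
  · simp [zSummand, h]
  · simp [zSummand, (compl_eq_empty_iff I).mp h]

/-- The side conditions record which neighbours of `c` can occur on either side of it. -/
theorem exists_zSummand_eq_word {I : Finset (ZMod n)} (hI : I.Nonempty) (hIc : Iᶜ.Nonempty)
    (c : ZMod n) :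
    ∃ α β : List (ZMod n), zSummand I = word (α ++ c :: β) ∧ c ∉ α ∧ c ∉ β ∧
      (c + 1 ∈ α → c + 1 ∈ I) ∧ (c + 1 ∈ β → c + 1 ∉ I) ∧
      (c - 1 ∈ α → c ∉ I) ∧ (c - 1 ∈ β → c ∈ I) := by
  obtain ⟨s, hs⟩ := hI
  obtain ⟨t, ht⟩ := hIc
  rw [mem_compl] at ht
  have hs' : s ∉ Iᶜ := by simpa using hs
  by_cases hc : c ∈ I
  · obtain ⟨lo, hi, -, hcw, hlo, hhi⟩ := exists_ccwProd_eq_word_append_cons ht hc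
    refine ⟨hi.reverse, lo.reverse ++ (arc s (n - 1)).filter (· ∈ Iᶜ),
      by rw [zSummand, hcw, ccwProd_eq_word hs']; simp [mul_assoc], ?_⟩
    simp only [List.mem_append, List.mem_reverse, List.mem_filter, decide_eq_true_iff,
      mem_compl]
    grind
  · obtain ⟨lo, hi, hccw, -, hlo, hhi⟩ :=
      exists_ccwProd_eq_word_append_cons hs' (mem_compl.mpr hc)
    refine ⟨((arc t (n - 1)).filter (· ∈ I)).reverse ++ lo, hi,
      by rw [zSummand, cwProd_eq_word ht, hccw]; simp, ?_⟩
    simp only [List.mem_append, List.mem_reverse, List.mem_filter, decide_eq_true_iff,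
      mem_compl] at hlo hhi ⊢
    grind

theorem cwProd_mul_ccwProd_eq_zero {I J : Finset (ZMod n)} {c : ZMod n} (hcI : c ∈ I)
    (hcJ : c ∈ J) : cwProd n I * ccwProd n J = 0 := by
  rcases eq_or_ne I univ with rfl | hI
  · simp
  rcases eq_or_ne J univ with rfl | hJ
  · simp
  obtain ⟨t, ht⟩ : ∃ t, t ∉ I := by simpa [eq_univ_iff_forall] using hI
  obtain ⟨s, hs⟩ : ∃ s, s ∉ J := by simpa [eq_univ_iff_forall] using hJ
  obtain ⟨lo, _, -, hcw, hlo, -⟩ := exists_ccwProd_eq_word_append_cons ht hcI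
  obtain ⟨lo', _, hccw, -, hlo', -⟩ := exists_ccwProd_eq_word_append_cons hs hcJ
  rw [hcw, hccw]
  exact word_append_cons_mul_word_append_cons (k := c + 1) (.inl rfl) (by grind) (by grind)

theorem ntlGen_mul_zSummand_eq_zero {I : Finset (ZMod n)} {j : ZMod n}
    (h : ¬(j ∉ I ∧ j + 1 ∈ I)) : ntlGen n j * zSummand I = 0 := by
  by_cases hI : I.Nonempty ∧ Iᶜ.Nonempty
  swap
  · rw [zSummand_eq_zero hI, mul_zero]
  obtain ⟨α, β, hz, hjα, -, hα₁, -, hα₂, -⟩ := exists_zSummand_eq_word hI.1 hI.2 j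
  rw [hz, show ntlGen n j = word ([] ++ j :: []) by simp]
  by_cases hjI : j ∈ I
  · exact word_append_cons_mul_word_append_cons (k := j - 1) (.inr rfl) (by simpa) (by grind)
  · exact word_append_cons_mul_word_append_cons (k := j + 1) (.inl rfl) (by simpa) (by grind)

theorem zSummand_mul_ntlGen_eq_zero {I : Finset (ZMod n)} {j : ZMod n}
    (h : ¬(j ∈ I ∧ j + 1 ∉ I)) : zSummand I * ntlGen n j = 0 := by
  by_cases hI : I.Nonempty ∧ Iᶜ.Nonempty
  swap
  · rw [zSummand_eq_zero hI, zero_mul]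
  obtain ⟨α, β, hz, -, hjβ, -, hβ₁, -, hβ₂⟩ := exists_zSummand_eq_word hI.1 hI.2 j
  rw [hz, show ntlGen n j = word ([] ++ j :: []) by simp]
  by_cases hjI : j ∈ I
  · exact word_append_cons_mul_word_append_cons (k := j + 1) (.inl rfl) (by simpa) (by grind)
  · exact word_append_cons_mul_word_append_cons (k := j - 1) (.inr rfl) (by simpa) (by grind)

theorem zSummand_mul_zSummand_eq_zero {I J : Finset (ZMod n)} (hIJ : I ≠ J) :
    zSummand I * zSummand J = 0 := by
  by_cases hI : I.Nonempty ∧ Iᶜ.Nonempty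
  swap
  · rw [zSummand_eq_zero hI, zero_mul]
  by_cases hJ : J.Nonempty ∧ Jᶜ.Nonempty
  swap
  · rw [zSummand_eq_zero hJ, mul_zero]
  by_cases hJI : ∃ c ∈ J, c ∉ I
  · obtain ⟨c, hcJ, hcI⟩ := hJI
    obtain ⟨α, β, hz, -, hcβ, -, -, -, hβ⟩ := exists_zSummand_eq_word hI.1 hI.2 c
    obtain ⟨α', β', hz', hcα', -, -, -, hα', -⟩ := exists_zSummand_eq_word hJ.1 hJ.2 c
    rw [hz, hz']
    exact word_append_cons_mul_word_append_cons (k := c - 1) (.inr rfl) (by simp [hcβ, hcα'])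
      (by grind)
  · obtain ⟨y, hyI, hyJ⟩ : ∃ y ∈ I, y ∉ J := by
      by_contra! h
      exact hIJ (Subset.antisymm h fun x hx => by_contra fun hxI => hJI ⟨x, hx, hxI⟩)
    obtain ⟨α, β, hz, -, hcβ, -, hβ, -, -⟩ := exists_zSummand_eq_word hI.1 hI.2 (y - 1)
    obtain ⟨α', β', hz', hcα', -, hα', -, -, -⟩ := exists_zSummand_eq_word hJ.1 hJ.2 (y - 1)
    rw [sub_add_cancel] at hβ hα'
    rw [hz, hz']
    exact word_append_cons_mul_word_append_cons (k := y) (.inl (sub_add_cancel y 1).symm)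
      (by simp [hcβ, hcα']) (by grind)

/-- With `S` the arc from `j + 2` to `j - 1`, both sides are
`a_j · (S ∩ I)↓ · a_{j+1} · (S \ I)↑ · a_j`, by choosing the base points `j` and `j + 1`. -/
theorem ntlGen_mul_zSummand_of_notMem_of_mem {I : Finset (ZMod n)} {j : ZMod n} (hj : j ∉ I)
    (hj₁ : j + 1 ∈ I) :
    ntlGen n j * zSummand I =
      zSummand (I.map (Equiv.swap j (j + 1)).toEmbedding) * ntlGen n j := by
  set J := I.map (Equiv.swap j (j + 1)).toEmbedding
  have hne : j ≠ j + 1 := (ne_of_mem_of_not_mem hj₁ hj).symm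
  have hJ : ∀ x, x ∈ J ↔ Equiv.swap j (j + 1) x ∈ I := fun x => by
    simp [J, Finset.mem_map_equiv]
  set S := arc (j + 1) ((j - (j + 1)).val - 1)
  have hS : ∀ x ∈ S, x ≠ j + 1 ∧ x ≠ j := fun x hx => by
    simpa using ne_of_mem_arc_right hx
  have h1 : (j + 1 - j).val - 1 = 0 := by
    rw [add_sub_cancel_left, ZMod.val_one_eq_one_mod]
    have := Nat.mod_le 1 n
    omega
  have harc : arc j (n - 1) = (j + 1) :: S := by
    rw [arc_eq_append_cons hne, h1]
    rfl
  have harc' : arc (j + 1) (n - 1) = S ++ [j] := by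
    rw [arc_eq_append_cons hne.symm, h1]
    rfl
  have hSJ : S.filter (· ∈ J) = S.filter (· ∈ I) := List.filter_congr fun x hx => by
    simp [hJ, Equiv.swap_apply_of_ne_of_ne (hS x hx).2 (hS x hx).1]
  have hSJc : S.filter (· ∈ Jᶜ) = S.filter (· ∈ Iᶜ) := List.filter_congr fun x hx => by
    simp [hJ, Equiv.swap_apply_of_ne_of_ne (hS x hx).2 (hS x hx).1]
  rw [zSummand, zSummand, cwProd_eq_word hj,
    ccwProd_eq_word (t := j + 1) (by simpa using hj₁),
    cwProd_eq_word (t := j + 1) (by simpa [hJ] using hj),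
    ccwProd_eq_word (t := j) (by simpa [hJ] using hj₁), harc, harc']
  simp only [List.filter_cons, List.filter_append, List.filter_nil, hSJ, hSJc]
  simp [hj, hj₁, hJ, mul_assoc]

theorem ntlGen_mul_zSummand (I : Finset (ZMod n)) (j : ZMod n) :
    ntlGen n j * zSummand I =
      zSummand (I.map (Equiv.swap j (j + 1)).toEmbedding) * ntlGen n j := by
  by_cases h : j ∉ I ∧ j + 1 ∈ I
  · exact ntlGen_mul_zSummand_of_notMem_of_mem h.1 h.2
  rw [ntlGen_mul_zSummand_eq_zero h, zSummand_mul_ntlGen_eq_zero]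
  simp only [mem_map_equiv, Equiv.symm_swap, Equiv.swap_apply_left, Equiv.swap_apply_right]
  tauto

theorem eNTL_mul_hNTL (K : ℕ) :
    eNTL n K * hNTL n (n - K) = ∑ I ∈ powersetCard K univ, zSummand I := by
  rw [eNTL, hNTL, sum_mul_sum]
  refine sum_congr rfl fun I hI => ?_
  rw [mem_powersetCard_univ] at hI
  have hIc : Iᶜ ∈ powersetCard (n - K) univ := by
    rw [mem_powersetCard_univ, card_compl, hI, ZMod.card]
  refine (sum_eq_single_of_mem Iᶜ hIc fun J hJ hJI => ?_).trans rfl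
  rw [mem_powersetCard_univ] at hJ
  obtain ⟨c, hcI, hcJ⟩ : ∃ c ∈ I, c ∈ J := by
    by_contra! h
    exact hJI (eq_of_subset_of_card_le (fun x hx => mem_compl.mpr fun hxI => h x hxI hx)
      (by rw [card_compl, ZMod.card, hI, hJ]))
  exact cwProd_mul_ccwProd_eq_zero hcI hcJ

theorem commute_eNTL_mul_hNTL_ntlGen (K : ℕ) (j : ZMod n) :
    Commute (eNTL n K * hNTL n (n - K)) (ntlGen n j) := by
  refine Commute.symm ?_
  rw [eNTL_mul_hNTL, Commute, SemiconjBy, mul_sum, sum_mul]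
  simp_rw [ntlGen_mul_zSummand]
  exact sum_equiv (Equiv.swap j (j + 1)).finsetCongr (by simp) fun _ _ => rfl

theorem eNTL_mul_hNTL_mul_eNTL_mul_hNTL {K L : ℕ} (hKL : K ≠ L) :
    eNTL n K * hNTL n (n - K) * (eNTL n L * hNTL n (n - L)) = 0 := by
  rw [eNTL_mul_hNTL, eNTL_mul_hNTL, sum_mul_sum]
  refine sum_eq_zero fun I hI => sum_eq_zero fun J hJ => zSummand_mul_zSummand_eq_zero ?_
  rintro rfl
  exact hKL ((mem_powersetCard_univ.mp hI).symm.trans (mem_powersetCard_univ.mp hJ))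

end NTL

theorem zNTL_central_and_orthogonal_general (n : ℕ) [NeZero n] :
    (∀ K : ℕ, 1 ≤ K → K ≤ n - 1 → ∀ x : NTL n,
      (eNTL n K * hNTL n (n - K)) * x = x * (eNTL n K * hNTL n (n - K))) ∧
    (∀ K L : ℕ, 1 ≤ K → K ≤ n - 1 → 1 ≤ L → L ≤ n - 1 → K ≠ L →
      (eNTL n K * hNTL n (n - K)) * (eNTL n L * hNTL n (n - L)) = 0) :=
  ⟨fun K _ _ x =>
      (NTL.commute_of_forall_commute_ntlGen (NTL.commute_eNTL_mul_hNTL_ntlGen K) x).eq,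
    fun _ _ _ _ _ _ hKL => NTL.eNTL_mul_hNTL_mul_eNTL_mul_hNTL hKL⟩

/-- In the affine nil-Temperley-Lieb algebra `A_n`, the elements
`z_k = e_k · h_{n-k}` (for `1 ≤ k ≤ n-1`) are central, and `z_k · z_l = 0`
for `k ≠ l`. -/
theorem zNTL_central_and_orthogonal (n : ℕ) [NeZero n] (hn : 2 ≤ n) :
    (∀ K : ℕ, 1 ≤ K → K ≤ n - 1 → ∀ x : NTL n,
      (eNTL n K * hNTL n (n - K)) * x = x * (eNTL n K * hNTL n (n - K))) ∧
    (∀ K L : ℕ, 1 ≤ K → K ≤ n - 1 → 1 ≤ L → L ≤ n - 1 → K ≠ L →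
      (eNTL n K * hNTL n (n - K)) * (eNTL n L * hNTL n (n - L)) = 0) :=
  zNTL_central_and_orthogonal_general n
end
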